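/- arXiv:2502.15968 — 4 statements merged into one kernel-verified Lean document; each statement's English description precedes it below -/
import Mathlib

section
/- For any two policies π and π̂ on an MDP with discount factor γ ∈ [0,1), the difference in expected discounted returns satisfies J(π̂) − J(π) = (1/(1−γ)) · E_{s∼d^{π̂}} E_{a∼π̂(·|s)} [A^π(s,a)], where d^{π̂} is the normalized discounted state visitation distribution of π̂ and A^π is the advantage function of π. -/
/-! Let `d_t` be the state distribution of `π̂` at time `t`. Unfolding `Q^π`,
`E_{s ∼ d_t, a ∼ π̂}[A^π(s,a)] = E_{s ∼ d_t, a ∼ π̂}[r(s,a)] + γ E_{d_{t+1}}[V^π] - E_{d_t}[V^π]`.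
Weighting by `γ^t` and summing over `t`, the reward terms add up to `J(π̂)` while the value terms
telescope to `-E_{ρ₀}[V^π] = -J(π)`. Every series converges geometrically because a policy turns
the MDP into a Markov chain with a row-stochastic transition matrix. -/

open scoped BigOperators

/-- A finite infinite-horizon discounted MDP. -/
structure MDP (S A : Type*) [Fintype S] [Fintype A] where
  p : S → A → S → ℝ
  r : S → A → ℝ
  ρ0 : S → ℝ
  γ : ℝ
  hγ0 : 0 ≤ γ
  hγ1 : γ < 1
  hp_nonneg : ∀ s a s', 0 ≤ p s a s'
  hp_sum : ∀ s a, ∑ s', p s a s' = 1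
  hρ_nonneg : ∀ s, 0 ≤ ρ0 s
  hρ_sum : ∑ s, ρ0 s = 1

/-- A (stationary, stochastic) policy. -/
def IsPolicy {S A : Type*} [Fintype S] [Fintype A] (π : S → A → ℝ) : Prop :=
  (∀ s a, 0 ≤ π s a) ∧ ∀ s, ∑ a, π s a = 1

variable {S A : Type*} [Fintype S] [Fintype A] [DecidableEq S]

/-- State distribution at time `t` under policy `π`, starting from `init`. -/
noncomputable def stateDist (M : MDP S A) (π : S → A → ℝ) (init : S → ℝ) : ℕ → S → ℝ
  | 0 => init
  | (t + 1) => fun s' => ∑ s, ∑ a, stateDist M π init t s * π s a * M.p s a s'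

/-- Expected discounted return of `π` from initial distribution `init`. -/
noncomputable def Jfrom (M : MDP S A) (π : S → A → ℝ) (init : S → ℝ) : ℝ :=
  ∑' t : ℕ, M.γ ^ t * ∑ s, ∑ a, stateDist M π init t s * π s a * M.r s a

/-- Expected discounted return `J(π)`. -/
noncomputable def Jret (M : MDP S A) (π : S → A → ℝ) : ℝ := Jfrom M π M.ρ0

/-- State value function `V^π(s)`. -/
noncomputable def Vval (M : MDP S A) (π : S → A → ℝ) (s0 : S) : ℝ :=
  Jfrom M π (fun s => if s = s0 then (1:ℝ) else 0)

/-- State-action value function `Q^π(s,a)`. -/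
noncomputable def Qval (M : MDP S A) (π : S → A → ℝ) (s : S) (a : A) : ℝ :=
  M.r s a + M.γ * ∑ s', M.p s a s' * Vval M π s'

/-- Advantage function `A^π(s,a) = Q^π(s,a) - V^π(s)`. -/
noncomputable def Adv (M : MDP S A) (π : S → A → ℝ) (s : S) (a : A) : ℝ :=
  Qval M π s a - Vval M π s

/-- Normalized discounted state visitation distribution
`d^π(s) = (1-γ) ∑_t γ^t P(s_t = s)`. -/
noncomputable def dvisit (M : MDP S A) (π : S → A → ℝ) (s : S) : ℝ :=
  (1 - M.γ) * ∑' t : ℕ, M.γ ^ t * stateDist M π M.ρ0 t s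

open Matrix

lemma summable_pow_mul_of_abs_le {γ B : ℝ} (hγ0 : 0 ≤ γ) (hγ1 : γ < 1) {c : ℕ → ℝ}
    (hc : ∀ t, |c t| ≤ B) : Summable fun t => γ ^ t * c t :=
  .of_norm_bounded ((summable_geometric_of_lt_one hγ0 hγ1).mul_right B) fun t => by
    rw [norm_mul, norm_pow, Real.norm_of_nonneg hγ0, Real.norm_eq_abs]
    exact mul_le_mul_of_nonneg_left (hc t) (pow_nonneg hγ0 t)

lemma Summable.tsum_add_succ_sub {f u : ℕ → ℝ} (hf : Summable f) (hu : Summable u) :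
    ∑' t, (f t + (u (t + 1) - u t)) = ∑' t, f t - u 0 := by
  have hu' : Summable fun t => u (t + 1) := (summable_nat_add_iff 1).mpr hu
  rw [hf.tsum_add (hu'.sub hu), hu'.tsum_sub hu, hu.tsum_eq_zero_add]
  ring

section RowStochastic

variable {n : Type*} [Fintype n] [DecidableEq n] {P : Matrix n n ℝ}

lemma abs_mulVec_apply_le_of_mem_rowStochastic (hP : P ∈ rowStochastic ℝ n) (f : n → ℝ)
    (i : n) : |(P *ᵥ f) i| ≤ ∑ j, |f j| :=
  calc |(P *ᵥ f) i| ≤ ∑ j, |P i j * f j| := Finset.abs_sum_le_sum_abs _ _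
    _ ≤ ∑ j, |f j| := Finset.sum_le_sum fun j _ => by
      rw [abs_mul, abs_of_nonneg (nonneg_of_mem_rowStochastic hP)]
      exact mul_le_of_le_one_left (abs_nonneg _) (le_one_of_mem_rowStochastic hP)

lemma summable_pow_mul_dotProduct_pow_mulVec (hP : P ∈ rowStochastic ℝ n) {γ : ℝ}
    (hγ0 : 0 ≤ γ) (hγ1 : γ < 1) (x f : n → ℝ) :
    Summable fun t => γ ^ t * (x ⬝ᵥ (P ^ t *ᵥ f)) := by
  have hterm (i : n) : Summable fun t => x i * (γ ^ t * (P ^ t *ᵥ f) i) :=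
    (summable_pow_mul_of_abs_le hγ0 hγ1 fun t =>
      abs_mulVec_apply_le_of_mem_rowStochastic (pow_mem hP t) f i).mul_left (x i)
  convert summable_sum fun i _ => hterm i using 2 with t
  simp only [dotProduct, Finset.mul_sum]
  exact Finset.sum_congr rfl fun i _ => mul_left_comm _ _ _

end RowStochastic

noncomputable def transitionMatrix (M : MDP S A) (π : S → A → ℝ) : Matrix S S ℝ :=
  Matrix.of fun s s' => ∑ a, π s a * M.p s a s'

noncomputable def expectedReward (M : MDP S A) (π : S → A → ℝ) (s : S) : ℝ :=
  ∑ a, π s a * M.r s a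

section Policy

variable (M : MDP S A)

lemma transitionMatrix_mem_rowStochastic {π : S → A → ℝ} (hπ : IsPolicy π) :
    transitionMatrix M π ∈ rowStochastic ℝ S := by
  refine mem_rowStochastic_iff_sum.mpr ⟨fun s s' => ?_, fun s => ?_⟩
  · exact Finset.sum_nonneg fun a _ => mul_nonneg (hπ.1 s a) (M.hp_nonneg s a s')
  · simp only [transitionMatrix, of_apply]
    rw [Finset.sum_comm]
    simp only [← Finset.mul_sum, M.hp_sum, mul_one, hπ.2]

lemma stateDist_eq_vecMul_pow (π : S → A → ℝ) (init : S → ℝ) (t : ℕ) :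
    stateDist M π init t = init ᵥ* transitionMatrix M π ^ t := by
  induction t with
  | zero => simp [stateDist]
  | succ t ih =>
    rw [pow_succ, ← vecMul_vecMul, ← ih]
    ext s'
    simp only [stateDist, vecMul, dotProduct, transitionMatrix, of_apply, Finset.mul_sum,
      mul_assoc]

lemma stateDist_dotProduct (π : S → A → ℝ) (init f : S → ℝ) (t : ℕ) :
    stateDist M π init t ⬝ᵥ f = init ⬝ᵥ (transitionMatrix M π ^ t *ᵥ f) := by
  rw [stateDist_eq_vecMul_pow, dotProduct_mulVec]

lemma stateDist_succ_dotProduct (π : S → A → ℝ) (init f : S → ℝ) (t : ℕ) :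
    stateDist M π init (t + 1) ⬝ᵥ f = stateDist M π init t ⬝ᵥ (transitionMatrix M π *ᵥ f) := by
  rw [stateDist_eq_vecMul_pow, stateDist_eq_vecMul_pow, pow_succ, ← vecMul_vecMul,
    dotProduct_mulVec]

lemma summable_pow_mul_stateDist_dotProduct {π : S → A → ℝ} (hπ : IsPolicy π) (init f : S → ℝ) :
    Summable fun t => M.γ ^ t * (stateDist M π init t ⬝ᵥ f) := by
  simp only [stateDist_dotProduct]
  exact summable_pow_mul_dotProduct_pow_mulVec (transitionMatrix_mem_rowStochastic M hπ)
    M.hγ0 M.hγ1 init f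

omit [DecidableEq S] in
lemma Jfrom_eq_tsum (π : S → A → ℝ) (init : S → ℝ) :
    Jfrom M π init = ∑' t, M.γ ^ t * (stateDist M π init t ⬝ᵥ expectedReward M π) := by
  simp only [Jfrom, dotProduct, expectedReward, Finset.mul_sum, mul_assoc]

lemma Vval_eq_tsum (π : S → A → ℝ) (s : S) :
    Vval M π s = ∑' t, M.γ ^ t * (transitionMatrix M π ^ t *ᵥ expectedReward M π) s := by
  have hδ : (fun s' => if s' = s then (1 : ℝ) else 0) = Pi.single s 1 := by
    ext s'; simp [Pi.single_apply]
  simp only [Vval, Jfrom_eq_tsum, stateDist_dotProduct, hδ, single_dotProduct, one_mul]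

lemma Jfrom_eq_dotProduct_Vval {π : S → A → ℝ} (hπ : IsPolicy π) (init : S → ℝ) :
    Jfrom M π init = init ⬝ᵥ Vval M π := by
  have hterm (s : S) : Summable fun t =>
      init s * (M.γ ^ t * (transitionMatrix M π ^ t *ᵥ expectedReward M π) s) := by
    simpa [stateDist_dotProduct, single_dotProduct] using
      (summable_pow_mul_stateDist_dotProduct M hπ (Pi.single s 1) (expectedReward M π)).mul_left
        (init s)
  simp only [Jfrom_eq_tsum, stateDist_dotProduct]
  simp only [dotProduct, Vval_eq_tsum, ← tsum_mul_left]
  rw [← Summable.tsum_finsetSum fun s _ => hterm s]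
  exact tsum_congr fun t => by rw [Finset.mul_sum]; exact Finset.sum_congr rfl fun s _ => by ring

end Policy

section Advantage

variable (M : MDP S A) {σ : S → A → ℝ}

lemma sum_mul_Adv_eq (hσ : IsPolicy σ) (π : S → A → ℝ) :
    (fun s => ∑ a, σ s a * Adv M π s a) =
      expectedReward M σ + M.γ • (transitionMatrix M σ *ᵥ Vval M π) - Vval M π := by
  ext s
  have hQ : ∑ a, σ s a * Qval M π s a =
      expectedReward M σ s + M.γ * (transitionMatrix M σ *ᵥ Vval M π) s := by
    simp only [Qval, mulVec, dotProduct, transitionMatrix, of_apply, expectedReward, mul_add,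
      Finset.sum_add_distrib, Finset.sum_mul, Finset.mul_sum]
    congr 1
    rw [Finset.sum_comm]
    exact Finset.sum_congr rfl fun s' _ => Finset.sum_congr rfl fun a _ => by ring
  simp only [Adv, mul_sub, Finset.sum_sub_distrib, ← Finset.sum_mul, hσ.2, one_mul, hQ]
  rfl

lemma sum_dvisit_mul (hσ : IsPolicy σ) (f : S → ℝ) :
    ∑ s, dvisit M σ s * f s = (1 - M.γ) * ∑' t, M.γ ^ t * (stateDist M σ M.ρ0 t ⬝ᵥ f) := by
  have hterm (s : S) : Summable fun t => M.γ ^ t * (stateDist M σ M.ρ0 t s * f s) := by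
    simpa [dotProduct_single, mul_assoc] using
      (summable_pow_mul_stateDist_dotProduct M hσ M.ρ0 (Pi.single s 1)).mul_right (f s)
  simp only [dvisit, mul_assoc, ← Finset.mul_sum, ← tsum_mul_right]
  rw [← Summable.tsum_finsetSum fun s _ => hterm s]
  simp only [dotProduct, Finset.mul_sum]

lemma stateDist_dotProduct_sum_mul_Adv (hσ : IsPolicy σ) (π : S → A → ℝ) (init : S → ℝ)
    (t : ℕ) :
    stateDist M σ init t ⬝ᵥ (fun s => ∑ a, σ s a * Adv M π s a) =
      stateDist M σ init t ⬝ᵥ expectedReward M σ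
        + M.γ * (stateDist M σ init (t + 1) ⬝ᵥ Vval M π) - stateDist M σ init t ⬝ᵥ Vval M π := by
  rw [sum_mul_Adv_eq M hσ, stateDist_succ_dotProduct, dotProduct_sub, dotProduct_add,
    dotProduct_smul, smul_eq_mul]

end Advantage

/-- performance difference lemma, Kakade & Langford:
`J(π̂) - J(π) = (1/(1-γ)) E_{s ∼ d^{π̂}} E_{a ∼ π̂(·|s)} [A^π(s,a)]`. -/
theorem performance_difference (M : MDP S A) (π πhat : S → A → ℝ)
    (hπ : IsPolicy π) (hπhat : IsPolicy πhat) :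
    Jret M πhat - Jret M π =
      (1 / (1 - M.γ)) * ∑ s, dvisit M πhat s * ∑ a, πhat s a * Adv M π s a := by
  set d := stateDist M πhat M.ρ0
  set u : ℕ → ℝ := fun t => M.γ ^ t * (d t ⬝ᵥ Vval M π)
  have hu : Summable u := summable_pow_mul_stateDist_dotProduct M hπhat M.ρ0 (Vval M π)
  have hu0 : u 0 = Jret M π := by
    simp [u, d, stateDist, Jret, Jfrom_eq_dotProduct_Vval M hπ]
  have hstep (t : ℕ) :
      M.γ ^ t * (d t ⬝ᵥ fun s => ∑ a, πhat s a * Adv M π s a) =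
        M.γ ^ t * (d t ⬝ᵥ expectedReward M πhat) + (u (t + 1) - u t) := by
    rw [stateDist_dotProduct_sum_mul_Adv M hπhat]
    ring
  rw [sum_dvisit_mul M hπhat, ← mul_assoc, one_div_mul_cancel (sub_ne_zero_of_ne M.hγ1.ne'),
    one_mul, tsum_congr hstep,
    (summable_pow_mul_stateDist_dotProduct M hπhat _ _).tsum_add_succ_sub hu, hu0, Jret,
    Jfrom_eq_tsum]
end

section
/- For any two policies π and π̂, the total variation distance between the normalized discounted state visitation distributions satisfies δ(d^π, d^{π̂}) ≤ (γ/(1−γ)) · E_{s∼d^{π̂}}[δ(π, π̂)(s)], where δ(π, π̂)(s) is the total variation distance between the action distributions π(·|s) and π̂(·|s). -/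
open scoped BigOperators

variable {S A : Type*} [Fintype S] [Fintype A]

/-- Total variation distance between two finite distributions on `S`. -/
noncomputable def tvS (μ ν : S → ℝ) : ℝ := (1 / 2) * ∑ s, |μ s - ν s|

/-- Total variation distance between the action distributions at state `s`. -/
noncomputable def tvA (π πhat : S → A → ℝ) (s : S) : ℝ :=
  (1 / 2) * ∑ a, |π s a - πhat s a|

lemma stateDist_nonneg (M : MDP S A) (π : S → A → ℝ) (hπ : IsPolicy π) :
    ∀ t s, 0 ≤ stateDist M π M.ρ0 t s
  | 0, s => M.hρ_nonneg s
  | (t+1), s' => by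
    simp only [stateDist]
    exact Finset.sum_nonneg fun s _ => Finset.sum_nonneg fun a _ =>
      mul_nonneg (mul_nonneg (stateDist_nonneg M π hπ t s) (hπ.1 s a)) (M.hp_nonneg s a s')

lemma stateDist_sum (M : MDP S A) (π : S → A → ℝ) (hπ : IsPolicy π) :
    ∀ t, ∑ s, stateDist M π M.ρ0 t s = 1
  | 0 => M.hρ_sum
  | (t+1) => by
    simp only [stateDist]
    rw [Finset.sum_comm]
    have h : ∀ s ∈ Finset.univ, (∑ s' : S, ∑ a, stateDist M π M.ρ0 t s * π s a * M.p s a s')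
        = stateDist M π M.ρ0 t s := by
      intro s _
      rw [Finset.sum_comm]
      have h2 : ∀ a ∈ Finset.univ, (∑ s' : S, stateDist M π M.ρ0 t s * π s a * M.p s a s')
          = stateDist M π M.ρ0 t s * π s a := by
        intro a _
        rw [← Finset.mul_sum, M.hp_sum, mul_one]
      rw [Finset.sum_congr rfl h2, ← Finset.mul_sum, hπ.2, mul_one]
    rw [Finset.sum_congr rfl h]
    exact stateDist_sum M π hπ t

lemma stateDist_le_one (M : MDP S A) (π : S → A → ℝ) (hπ : IsPolicy π) (t : ℕ) (s : S) :
    stateDist M π M.ρ0 t s ≤ 1 := by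
  have := stateDist_sum M π hπ t
  calc stateDist M π M.ρ0 t s ≤ ∑ s', stateDist M π M.ρ0 t s' :=
        Finset.single_le_sum (fun s' _ => stateDist_nonneg M π hπ t s') (Finset.mem_univ s)
    _ = 1 := this

lemma summable_dd (M : MDP S A) (π : S → A → ℝ) (hπ : IsPolicy π) (s : S) :
    Summable (fun t => M.γ ^ t * stateDist M π M.ρ0 t s) := by
  apply Summable.of_nonneg_of_le
    (fun t => mul_nonneg (pow_nonneg M.hγ0 t) (stateDist_nonneg M π hπ t s))
    (fun t => by
      calc M.γ ^ t * stateDist M π M.ρ0 t s ≤ M.γ ^ t * 1 :=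
            mul_le_mul_of_nonneg_left (stateDist_le_one M π hπ t s) (pow_nonneg M.hγ0 t)
        _ = M.γ ^ t := mul_one _)
  exact summable_geometric_of_lt_one M.hγ0 M.hγ1

lemma dvisit_nonneg (M : MDP S A) (π : S → A → ℝ) (hπ : IsPolicy π) (s : S) :
    0 ≤ dvisit M π s := by
  apply mul_nonneg (by linarith [M.hγ1])
  exact tsum_nonneg fun t => mul_nonneg (pow_nonneg M.hγ0 t) (stateDist_nonneg M π hπ t s)

lemma dvisit_fixed (M : MDP S A) (π : S → A → ℝ) (hπ : IsPolicy π) (s' : S) :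
    dvisit M π s' = (1 - M.γ) * M.ρ0 s' +
      M.γ * ∑ s, ∑ a, dvisit M π s * π s a * M.p s a s' := by
  have hS := summable_dd M π hπ
  have key : (∑' t : ℕ, M.γ ^ t * stateDist M π M.ρ0 t s')
      = M.ρ0 s' + M.γ * ∑ s, ∑ a,
          (∑' t : ℕ, M.γ ^ t * stateDist M π M.ρ0 t s) * π s a * M.p s a s' := by
    rw [Summable.tsum_eq_zero_add (hS s')]
    have h0 : M.γ ^ 0 * stateDist M π M.ρ0 0 s' = M.ρ0 s' := by
      simp [stateDist]
    rw [h0]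
    congr 1
    have step1 : ∀ t : ℕ, M.γ ^ (t+1) * stateDist M π M.ρ0 (t+1) s'
        = ∑ s, ∑ a, (M.γ ^ t * stateDist M π M.ρ0 t s * π s a * M.p s a s') * M.γ := by
      intro t
      show M.γ ^ (t+1) * (∑ s, ∑ a, stateDist M π M.ρ0 t s * π s a * M.p s a s') = _
      rw [Finset.mul_sum]
      refine Finset.sum_congr rfl fun s _ => ?_
      rw [Finset.mul_sum]
      refine Finset.sum_congr rfl fun a _ => ?_
      rw [pow_succ]; ring
    rw [tsum_congr step1]
    have hsab : ∀ s a, Summable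
        (fun t => (M.γ ^ t * stateDist M π M.ρ0 t s * π s a * M.p s a s') * M.γ) :=
      fun s a => (((hS s).mul_right _).mul_right _).mul_right _
    rw [Summable.tsum_finsetSum (fun s _ => summable_sum (fun a _ => hsab s a))]
    rw [Finset.sum_congr rfl (fun s _ => Summable.tsum_finsetSum (fun a _ => hsab s a))]
    simp only [tsum_mul_right]
    rw [Finset.mul_sum]
    refine Finset.sum_congr rfl fun s _ => ?_
    rw [Finset.mul_sum]
    refine Finset.sum_congr rfl fun a _ => ?_
    ring
  have h2 : ∑ s, ∑ a, ((1 - M.γ) * ∑' t : ℕ, M.γ ^ t * stateDist M π M.ρ0 t s)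
        * π s a * M.p s a s'
      = (1 - M.γ) * ∑ s, ∑ a,
        (∑' t : ℕ, M.γ ^ t * stateDist M π M.ρ0 t s) * π s a * M.p s a s' := by
    rw [Finset.mul_sum]
    refine Finset.sum_congr rfl fun s _ => ?_
    rw [Finset.mul_sum]
    refine Finset.sum_congr rfl fun a _ => ?_
    ring
  simp only [dvisit]
  rw [h2, key]
  ring


/-- the total variation distance between the normalized discounted
state visitation distributions of two policies satisfies
`δ(d^π, d^{π̂}) ≤ (γ/(1-γ)) E_{s ∼ d^{π̂}} [δ(π, π̂)(s)]`. -/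
theorem visitation_tv_bound (M : MDP S A) (π πhat : S → A → ℝ)
    (hπ : IsPolicy π) (hπhat : IsPolicy πhat) :
    tvS (dvisit M π) (dvisit M πhat) ≤
      (M.γ / (1 - M.γ)) * ∑ s, dvisit M πhat s * tvA π πhat s := by
  have hγpos : (0:ℝ) < 1 - M.γ := by linarith [M.hγ1]
  set D := dvisit M π with hD
  set E := dvisit M πhat with hE
  have hdiff : ∀ s', D s' - E s' = M.γ * ∑ s, ∑ a,
      ((D s - E s) * π s a * M.p s a s' + E s * (π s a - πhat s a) * M.p s a s') := by
    intro s'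
    rw [hD, hE, dvisit_fixed M π hπ s', dvisit_fixed M πhat hπhat s']
    have hsplit : ∑ s, ∑ a, dvisit M π s * π s a * M.p s a s'
        - ∑ s, ∑ a, dvisit M πhat s * πhat s a * M.p s a s'
        = ∑ s, ∑ a, ((dvisit M π s - dvisit M πhat s) * π s a * M.p s a s'
            + dvisit M πhat s * (π s a - πhat s a) * M.p s a s') := by
      rw [← Finset.sum_sub_distrib]
      refine Finset.sum_congr rfl fun s _ => ?_
      rw [← Finset.sum_sub_distrib]
      refine Finset.sum_congr rfl fun a _ => ?_
      ring
    rw [← hsplit]; ring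
  have habs : ∀ s', |D s' - E s'| ≤ M.γ * ∑ s, ∑ a,
      (|D s - E s| * π s a * M.p s a s' + E s * |π s a - πhat s a| * M.p s a s') := by
    intro s'
    rw [hdiff s', abs_mul, abs_of_nonneg M.hγ0]
    apply mul_le_mul_of_nonneg_left _ M.hγ0
    calc |∑ s, ∑ a, ((D s - E s) * π s a * M.p s a s'
            + E s * (π s a - πhat s a) * M.p s a s')|
        ≤ ∑ s, |∑ a, ((D s - E s) * π s a * M.p s a s'
            + E s * (π s a - πhat s a) * M.p s a s')| := Finset.abs_sum_le_sum_abs _ _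
      _ ≤ ∑ s, ∑ a, |(D s - E s) * π s a * M.p s a s'
            + E s * (π s a - πhat s a) * M.p s a s'| :=
          Finset.sum_le_sum fun s _ => Finset.abs_sum_le_sum_abs _ _
      _ ≤ ∑ s, ∑ a, (|D s - E s| * π s a * M.p s a s'
            + E s * |π s a - πhat s a| * M.p s a s') := by
          refine Finset.sum_le_sum fun s _ => Finset.sum_le_sum fun a _ => ?_
          calc |(D s - E s) * π s a * M.p s a s' + E s * (π s a - πhat s a) * M.p s a s'|
              ≤ |(D s - E s) * π s a * M.p s a s'|
                + |E s * (π s a - πhat s a) * M.p s a s'| := abs_add_le _ _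
            _ = |D s - E s| * π s a * M.p s a s'
                + E s * |π s a - πhat s a| * M.p s a s' := by
                rw [abs_mul, abs_mul, abs_mul, abs_mul,
                  abs_of_nonneg (hπ.1 s a), abs_of_nonneg (M.hp_nonneg s a s'),
                  abs_of_nonneg (dvisit_nonneg M πhat hπhat s)]
  have hmargin : ∀ s a, (∑ s' : S, (|D s - E s| * π s a * M.p s a s'
        + E s * |π s a - πhat s a| * M.p s a s'))
      = |D s - E s| * π s a + E s * |π s a - πhat s a| := by
    intro s a
    rw [Finset.sum_add_distrib, ← Finset.mul_sum, ← Finset.mul_sum, M.hp_sum,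
      mul_one, mul_one]
  have htv : ∀ s, ∑ a, |π s a - πhat s a| = 2 * tvA π πhat s := by
    intro s
    simp only [tvA]
    ring
  have hW : ∑ s', |D s' - E s'| ≤
      M.γ * (∑ s, |D s - E s| + 2 * ∑ s, E s * tvA π πhat s) := by
    calc ∑ s', |D s' - E s'|
        ≤ ∑ s', M.γ * ∑ s, ∑ a, (|D s - E s| * π s a * M.p s a s'
            + E s * |π s a - πhat s a| * M.p s a s') :=
          Finset.sum_le_sum fun s' _ => habs s'
      _ = M.γ * ∑ s', ∑ s, ∑ a, (|D s - E s| * π s a * M.p s a s'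
            + E s * |π s a - πhat s a| * M.p s a s') := by rw [Finset.mul_sum]
      _ = M.γ * ∑ s, ∑ a, ∑ s', (|D s - E s| * π s a * M.p s a s'
            + E s * |π s a - πhat s a| * M.p s a s') := by
          rw [Finset.sum_comm]
          congr 1
          refine Finset.sum_congr rfl fun s _ => ?_
          exact Finset.sum_comm
      _ = M.γ * ∑ s, ∑ a, (|D s - E s| * π s a + E s * |π s a - πhat s a|) := by
          congr 1
          refine Finset.sum_congr rfl fun s _ => Finset.sum_congr rfl fun a _ => ?_
          exact hmargin s a
      _ = M.γ * (∑ s, |D s - E s| + 2 * ∑ s, E s * tvA π πhat s) := by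
          congr 1
          rw [Finset.mul_sum, ← Finset.sum_add_distrib]
          refine Finset.sum_congr rfl fun s _ => ?_
          rw [Finset.sum_add_distrib, ← Finset.mul_sum, ← Finset.mul_sum, hπ.2 s,
            mul_one, htv s]
          ring
  show tvS D E ≤ _
  simp only [tvS]
  rw [div_mul_eq_mul_div M.γ (1 - M.γ) (∑ s, E s * tvA π πhat s), le_div_iff₀ hγpos]
  nlinarith [hW]
end

section
/- Let π_k be a current policy, π_r any reference policy whose support contains that of π at every state, and π any policy. Then J(π) − J(π_k) ≥ (1/(1−γ)) E_{(s,a)∼d^{π_r}}[(π(a|s)/π_r(a|s)) A^{π_k}(s,a)] − (2γ C^π_{π_k}/(1−γ)²) E_{s∼d^{π_r}}[δ(π, π_r)(s)], where C^π_{π_k} = max_{s∈S} |E_{a∼π(·|s)}[A^{π_k}(s,a)]|. -/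
open scoped BigOperators

/-- policy improvement lower bound with an arbitrary reference policy.
`S`, `A` are finite state/action spaces, `γ ∈ [0,1)` the discount factor, `J` the expected
discounted return, `d` the normalized discounted state visitation distribution, `Adv` the
advantage function of the current policy `πk`, and the total variation distances are written
out explicitly.  Assuming the standard performance-difference equality and the visitation
total-variation bound, for any policy `π` whose support is contained in that of the
reference policy `πr` at every state,
`J(π) − J(πk) ≥ (1/(1−γ)) E_{(s,a)∼d^{πr}}[(π(a|s)/πr(a|s)) A^{πk}(s,a)]
  − (2γ C^π_{πk}/(1−γ)²) E_{s∼d^{πr}}[δ(π,πr)(s)]`,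
with `C^π_{πk} = max_s |E_{a∼π(·|s)}[A^{πk}(s,a)]|`. -/
theorem policy_improvement_reference
    {S A : Type*} [Fintype S] [Fintype A] [Nonempty S]
    (γ : ℝ) (hγ0 : 0 ≤ γ) (hγ1 : γ < 1)
    (J : (S → A → ℝ) → ℝ)                    -- expected discounted return
    (d : (S → A → ℝ) → S → ℝ)                -- normalized discounted state visitation
    (πk πr π : S → A → ℝ)                     -- current, reference, and future policies
    (Adv : S → A → ℝ)                         -- advantage function A^{πk} of πk
    -- policies are probability distributions over actions at every state
    (hπ : (∀ s a, 0 ≤ π s a) ∧ ∀ s, ∑ a, π s a = 1)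
    (hπr : (∀ s a, 0 ≤ πr s a) ∧ ∀ s, ∑ a, πr s a = 1)
    -- visitation distributions are probability distributions over states
    (hdπ : (∀ s, 0 ≤ d π s) ∧ ∑ s, d π s = 1)
    (hdπr : (∀ s, 0 ≤ d πr s) ∧ ∑ s, d πr s = 1)
    -- the support of π is contained in the support of πr at every state
    (hsupp : ∀ s a, π s a ≠ 0 → πr s a ≠ 0)
    -- standard equality: J(π) − J(πk) = (1/(1−γ)) E_{s∼d^π} E_{a∼π}[A^{πk}(s,a)]
    (hPD : J π - J πk = (1 / (1 - γ)) * ∑ s, d π s * ∑ a, π s a * Adv s a)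
    -- standard bound: δ(d^π, d^{πr}) ≤ (γ/(1−γ)) E_{s∼d^{πr}}[δ(π,πr)(s)]
    (hTV : (1 / 2) * ∑ s, |d π s - d πr s| ≤
        (γ / (1 - γ)) * ∑ s, d πr s * ((1 / 2) * ∑ a, |π s a - πr s a|)) :
    J π - J πk ≥
      (1 / (1 - γ)) * ∑ s, d πr s * ∑ a, πr s a * ((π s a / πr s a) * Adv s a)
      - (2 * γ * (⨆ s, |∑ a, π s a * Adv s a|) / (1 - γ) ^ 2) *
          ∑ s, d πr s * ((1 / 2) * ∑ a, |π s a - πr s a|) := by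
  obtain ⟨hπ0, hπ1⟩ := hπ
  have h1γ : (0:ℝ) < 1 - γ := by linarith
  set C := ⨆ s, |∑ a, π s a * Adv s a| with hCdef
  have hC : BddAbove (Set.range fun s => |∑ a, π s a * Adv s a|) :=
    (Set.finite_range _).bddAbove
  have hCb : ∀ s, |∑ a, π s a * Adv s a| ≤ C := fun s => le_ciSup hC s
  have hC0 : 0 ≤ C := le_trans (abs_nonneg _) (hCb (Classical.arbitrary S))
  set D := ∑ s, d πr s * ((1 / 2) * ∑ a, |π s a - πr s a|) with hD
  have hD0 : 0 ≤ D := Finset.sum_nonneg fun s _ => mul_nonneg (hdπr.1 s)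
    (by positivity)
  have hfix : ∀ s, ∑ a, πr s a * ((π s a / πr s a) * Adv s a)
      = ∑ a, π s a * Adv s a := by
    intro s
    refine Finset.sum_congr rfl fun a _ => ?_
    by_cases h : πr s a = 0
    · have hz : π s a = 0 := by by_contra hne; exact hsupp s a hne h
      simp [h, hz]
    · field_simp
  have hsum : ∑ s, |d π s - d πr s| ≤ 2 * (γ / (1 - γ)) * D := by
    rw [hD]; linarith [hTV]
  have hdiff : |(∑ s, d π s * ∑ a, π s a * Adv s a)
      - ∑ s, d πr s * ∑ a, π s a * Adv s a| ≤ C * (2 * (γ / (1 - γ)) * D) := by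
    rw [← Finset.sum_sub_distrib]
    calc |∑ s, (d π s * ∑ a, π s a * Adv s a - d πr s * ∑ a, π s a * Adv s a)|
        ≤ ∑ s, |d π s * ∑ a, π s a * Adv s a - d πr s * ∑ a, π s a * Adv s a| :=
          Finset.abs_sum_le_sum_abs _ _
      _ = ∑ s, |d π s - d πr s| * |∑ a, π s a * Adv s a| := by
          refine Finset.sum_congr rfl fun s _ => ?_
          rw [← sub_mul, abs_mul]
      _ ≤ ∑ s, |d π s - d πr s| * C :=
          Finset.sum_le_sum fun s _ =>
            mul_le_mul_of_nonneg_left (hCb s) (abs_nonneg _)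
      _ = (∑ s, |d π s - d πr s|) * C := by rw [Finset.sum_mul]
      _ ≤ (2 * (γ / (1 - γ)) * D) * C := mul_le_mul_of_nonneg_right hsum hC0
      _ = C * (2 * (γ / (1 - γ)) * D) := mul_comm _ _
  have key : (∑ s, d πr s * ∑ a, π s a * Adv s a) - C * (2 * (γ / (1 - γ)) * D)
      ≤ ∑ s, d π s * ∑ a, π s a * Adv s a := by
    have := (abs_le.mp hdiff).1
    linarith
  have hrw : ∑ s, d πr s * ∑ a, πr s a * ((π s a / πr s a) * Adv s a)
      = ∑ s, d πr s * ∑ a, π s a * Adv s a := by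
    refine Finset.sum_congr rfl fun s _ => ?_
    rw [hfix s]
  rw [ge_iff_le, hPD, hrw]
  have hmul : (1 / (1 - γ)) * ((∑ s, d πr s * ∑ a, π s a * Adv s a)
      - C * (2 * (γ / (1 - γ)) * D))
      ≤ (1 / (1 - γ)) * ∑ s, d π s * ∑ a, π s a * Adv s a :=
    mul_le_mul_of_nonneg_left key (by positivity)
  have heq : (1 / (1 - γ)) * ((∑ s, d πr s * ∑ a, π s a * Adv s a)
      - C * (2 * (γ / (1 - γ)) * D))
      = (1 / (1 - γ)) * (∑ s, d πr s * ∑ a, π s a * Adv s a)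
        - (2 * γ * C / (1 - γ) ^ 2) * D := by
    field_simp
  linarith [heq ▸ hmul]
end

section
/- If a policy π satisfies the clipping constraint |π(a|s)/π_k(a|s) − 1| ≤ ε for all (s,a) in the support of d^{π_k} (with the support of π contained in that of π_k), then the expected total variation distance satisfies E_{s∼d^{π_k}}[δ(π, π_k)(s)] ≤ ε/2. -/
open scoped BigOperators

/-- clipping controls expected total variation distance.
If `|π(a|s)/πk(a|s) − 1| ≤ ε` on the support of `d^{πk}` (and the support of `π` is
contained in that of `πk`), then `E_{s∼d^{πk}}[δ(π, πk)(s)] ≤ ε/2`, where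
`δ(π,πk)(s) = (1/2) Σ_a |π(a|s) − πk(a|s)|`. -/
theorem clipping_tv_bound
    {S A : Type*} [Fintype S] [Fintype A]
    (ε : ℝ) (hε : 0 < ε)
    (πk π : S → A → ℝ)
    (d : S → ℝ)                                 -- normalized visitation distribution of πk
    (hπ : (∀ s a, 0 ≤ π s a) ∧ ∀ s, ∑ a, π s a = 1)
    (hπk : (∀ s a, 0 ≤ πk s a) ∧ ∀ s, ∑ a, πk s a = 1)
    (hd : (∀ s, 0 ≤ d s) ∧ ∑ s, d s = 1)
    -- the support of π is contained in the support of πk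
    (hsupp : ∀ s a, π s a ≠ 0 → πk s a ≠ 0)
    -- clipping constraint on the support of d^{πk}
    (hclip : ∀ s a, d s ≠ 0 → πk s a ≠ 0 → |π s a / πk s a - 1| ≤ ε) :
    ∑ s, d s * ((1 / 2) * ∑ a, |π s a - πk s a|) ≤ ε / 2 := by
  have key : ∀ s, d s * ((1 / 2) * ∑ a, |π s a - πk s a|) ≤ d s * (ε / 2) := by
    intro s
    rcases eq_or_ne (d s) 0 with h0 | h0
    · simp [h0]
    · apply mul_le_mul_of_nonneg_left _ (hd.1 s)
      have hsum : ∑ a, |π s a - πk s a| ≤ ε := by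
        calc ∑ a, |π s a - πk s a| ≤ ∑ a, ε * πk s a := by
              apply Finset.sum_le_sum
              intro a _
              rcases eq_or_ne (πk s a) 0 with hk | hk
              · have hp : π s a = 0 := by
                  by_contra hp; exact (hsupp s a hp) hk
                simp [hk, hp]
              · have h1 := hclip s a h0 hk
                have hkpos : 0 < πk s a := lt_of_le_of_ne (hπk.1 s a) (Ne.symm hk)
                have heq : π s a / πk s a - 1 = (π s a - πk s a) / πk s a := by
                  field_simp
                rw [heq, abs_div, abs_of_pos hkpos, div_le_iff₀ hkpos] at h1
                linarith
          _ = ε := by rw [← Finset.mul_sum, hπk.2 s, mul_one]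
      linarith
  calc ∑ s, d s * ((1 / 2) * ∑ a, |π s a - πk s a|) ≤ ∑ s, d s * (ε / 2) :=
        Finset.sum_le_sum (fun s _ => key s)
    _ = ε / 2 := by rw [← Finset.sum_mul, hd.2, one_mul]
end
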